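/- Minkowski space ℝⁿ₁ with its causal relation ≤, timelike relation ≪, and time separation τ forms a Lorentzian pre-length space: τ is lower semicontinuous, τ(x,z) ≥ τ(x,y) + τ(y,z) for x ≤ y ≤ z, τ(x,y) = 0 whenever x ≰ y, and τ(x,y) > 0 iff x ≪ y. -/

import Mathlib

open Finset in
/-- The Minkowski bilinear form on ℝⁿ⁺¹₁. -/
def eta (n : ℕ) (v w : Fin (n + 1) → ℝ) : ℝ :=
  -(v 0 * w 0) + ∑ i : Fin n, v i.succ * w i.succ

/-- A vector is future-directed timelike. -/
def FdTimelike (n : ℕ) (v : Fin (n + 1) → ℝ) : Prop := eta n v v < 0 ∧ 0 < v 0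

/-- A vector is future-directed causal. -/
def FdCausal (n : ℕ) (v : Fin (n + 1) → ℝ) : Prop := eta n v v ≤ 0 ∧ v ≠ 0 ∧ 0 < v 0

/-- The causal relation on Minkowski space. -/
def CausalLe (n : ℕ) (p q : Fin (n + 1) → ℝ) : Prop := p = q ∨ FdCausal n (q - p)

/-- The chronological (timelike) relation on Minkowski space. -/
def ChronLt (n : ℕ) (p q : Fin (n + 1) → ℝ) : Prop := FdTimelike n (q - p)

open Classical in
/-- The time separation function of Minkowski space. -/
noncomputable def tauMink (n : ℕ) (p q : Fin (n + 1) → ℝ) : ℝ :=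
  if FdCausal n (q - p) then Real.sqrt (-(eta n (q - p) (q - p))) else 0

/-!
Write `η(v, v) = ‖v⃗‖² - v₀²` with `v⃗` the spatial part of `v`. Then `v` is future causal
(timelike) iff `‖v⃗‖ ≤ v₀` (`<`), so both cones are closed under addition by the triangle
inequality for `‖·‖`. Cauchy–Schwarz for the spatial parts together with
`(a² - α²)(b² - β²) ≤ (ab - αβ)²` gives the reverse Cauchy–Schwarz inequality
`-η(u, w) ≥ √(-η(u, u)) √(-η(w, w))` on the causal cone, and expanding `-η(u + w, u + w)`
turns it into the reverse triangle inequality. Since `τ` vanishes on null vectors, it is a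
continuous nonnegative function cut off outside the open timelike cone, hence lower
semicontinuous.
-/

open scoped RealInnerProductSpace

theorem ContinuousOn.lowerSemicontinuous_indicator {α β : Type*} [TopologicalSpace α]
    [LinearOrder β] [TopologicalSpace β] [OrderTopology β] [Zero β] {s : Set α} {f : α → β}
    (hf : ContinuousOn f s) (hs : IsOpen s) (hf₀ : ∀ x ∈ s, 0 ≤ f x) :
    LowerSemicontinuous (s.indicator f) := by
  intro x y hy
  by_cases hx : x ∈ s
  · rw [Set.indicator_of_mem hx] at hy
    filter_upwards [hs.mem_nhds hx, (hf.continuousAt (hs.mem_nhds hx)).eventually_const_lt hy]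
      with z hz hyz
    rwa [Set.indicator_of_mem hz]
  · rw [Set.indicator_of_notMem hx] at hy
    filter_upwards with z
    by_cases hz : z ∈ s
    · rw [Set.indicator_of_mem hz]
      exact hy.trans_le (hf₀ z hz)
    · rwa [Set.indicator_of_notMem hz]

theorem sq_sub_sq_mul_sq_sub_sq_le (a b α β : ℝ) :
    (a ^ 2 - α ^ 2) * (b ^ 2 - β ^ 2) ≤ (a * b - α * β) ^ 2 := by
  nlinarith [sq_nonneg (a * β - α * b)]

section Minkowski

variable {n : ℕ}

def spatial (v : Fin (n + 1) → ℝ) : EuclideanSpace ℝ (Fin n) := WithLp.toLp 2 (Fin.tail v)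

theorem spatial_add (u w : Fin (n + 1) → ℝ) : spatial (u + w) = spatial u + spatial w := rfl

theorem eta_eq_inner (v w : Fin (n + 1) → ℝ) :
    eta n v w = ⟪spatial v, spatial w⟫ - v 0 * w 0 := by
  simp only [eta, spatial, PiLp.inner_apply, Fin.tail, RCLike.inner_apply, Real.ringHom_apply,
    mul_comm]
  ring

theorem eta_self (v : Fin (n + 1) → ℝ) : eta n v v = ‖spatial v‖ ^ 2 - v 0 ^ 2 := by
  rw [eta_eq_inner, real_inner_self_eq_norm_sq]
  ring

theorem eta_add_self (u w : Fin (n + 1) → ℝ) :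
    eta n (u + w) (u + w) = eta n u u + 2 * eta n u w + eta n w w := by
  simp only [eta_eq_inner, spatial_add, inner_add_left, inner_add_right, Pi.add_apply,
    real_inner_comm (spatial u) (spatial w)]
  ring

theorem continuous_eta_self : Continuous fun v : Fin (n + 1) → ℝ => eta n v v := by
  unfold eta
  fun_prop

theorem fdCausal_iff (v : Fin (n + 1) → ℝ) : FdCausal n v ↔ ‖spatial v‖ ≤ v 0 ∧ 0 < v 0 := by
  rw [FdCausal, eta_self, sub_nonpos]
  constructor
  · rintro ⟨h, -, h₀⟩
    exact ⟨(sq_le_sq₀ (norm_nonneg _) h₀.le).1 h, h₀⟩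
  · rintro ⟨h, h₀⟩
    exact ⟨(sq_le_sq₀ (norm_nonneg _) h₀.le).2 h, ne_of_apply_ne (· 0) h₀.ne', h₀⟩

theorem fdTimelike_iff (v : Fin (n + 1) → ℝ) :
    FdTimelike n v ↔ ‖spatial v‖ < v 0 ∧ 0 < v 0 := by
  rw [FdTimelike, eta_self, sub_neg]
  exact and_congr_left fun h₀ => sq_lt_sq₀ (norm_nonneg _) h₀.le

theorem FdTimelike.fdCausal {v : Fin (n + 1) → ℝ} (h : FdTimelike n v) : FdCausal n v := by
  rw [fdTimelike_iff] at h
  exact (fdCausal_iff v).2 ⟨h.1.le, h.2⟩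

theorem isOpen_setOf_fdTimelike : IsOpen {v : Fin (n + 1) → ℝ | FdTimelike n v} :=
  (isOpen_lt continuous_eta_self continuous_const).inter
    (isOpen_lt continuous_const (continuous_apply 0))

theorem FdCausal.add {u w : Fin (n + 1) → ℝ} (hu : FdCausal n u) (hw : FdCausal n w) :
    FdCausal n (u + w) := by
  rw [fdCausal_iff] at *
  rw [spatial_add, Pi.add_apply]
  exact ⟨(norm_add_le _ _).trans (add_le_add hu.1 hw.1), add_pos hu.2 hw.2⟩

theorem FdTimelike.add {u w : Fin (n + 1) → ℝ} (hu : FdTimelike n u) (hw : FdTimelike n w) :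
    FdTimelike n (u + w) := by
  rw [fdTimelike_iff] at *
  rw [spatial_add, Pi.add_apply]
  exact ⟨(norm_add_le _ _).trans_lt (add_lt_add hu.1 hw.1), add_pos hu.2 hw.2⟩

theorem FdCausal.sqrt_mul_sqrt_le_neg_eta {u w : Fin (n + 1) → ℝ} (hu : FdCausal n u)
    (hw : FdCausal n w) : √(-eta n u u) * √(-eta n w w) ≤ -eta n u w := by
  rw [fdCausal_iff] at hu hw
  have hu₀ : 0 ≤ u 0 ^ 2 - ‖spatial u‖ ^ 2 :=
    sub_nonneg.2 (pow_le_pow_left₀ (norm_nonneg _) hu.1 2)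
  have hαβ : ‖spatial u‖ * ‖spatial w‖ ≤ u 0 * w 0 :=
    mul_le_mul hu.1 hw.1 (norm_nonneg _) hu.2.le
  rw [eta_self, eta_self, eta_eq_inner, neg_sub, neg_sub, ← Real.sqrt_mul hu₀]
  calc √((u 0 ^ 2 - ‖spatial u‖ ^ 2) * (w 0 ^ 2 - ‖spatial w‖ ^ 2))
      ≤ √((u 0 * w 0 - ‖spatial u‖ * ‖spatial w‖) ^ 2) :=
        Real.sqrt_le_sqrt (sq_sub_sq_mul_sq_sub_sq_le _ _ _ _)
    _ = u 0 * w 0 - ‖spatial u‖ * ‖spatial w‖ := Real.sqrt_sq (sub_nonneg.2 hαβ)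
    _ ≤ u 0 * w 0 - ⟪spatial u, spatial w⟫ := sub_le_sub_left (real_inner_le_norm _ _) _
    _ = -(⟪spatial u, spatial w⟫ - u 0 * w 0) := by ring

theorem FdCausal.sqrt_neg_eta_add_le {u w : Fin (n + 1) → ℝ} (hu : FdCausal n u)
    (hw : FdCausal n w) : √(-eta n u u) + √(-eta n w w) ≤ √(-eta n (u + w) (u + w)) := by
  have hu₀ : 0 ≤ -eta n u u := neg_nonneg.2 hu.1
  have hw₀ : 0 ≤ -eta n w w := neg_nonneg.2 hw.1
  rw [Real.le_sqrt (by positivity) (neg_nonneg.2 (hu.add hw).1), add_sq, Real.sq_sqrt hu₀,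
    Real.sq_sqrt hw₀, eta_add_self]
  linarith [hu.sqrt_mul_sqrt_le_neg_eta hw]

theorem tauMink_of_fdCausal {p q : Fin (n + 1) → ℝ} (h : FdCausal n (q - p)) :
    tauMink n p q = √(-eta n (q - p) (q - p)) :=
  if_pos h

theorem tauMink_of_not_fdCausal {p q : Fin (n + 1) → ℝ} (h : ¬FdCausal n (q - p)) :
    tauMink n p q = 0 :=
  if_neg h

theorem tauMink_self (p : Fin (n + 1) → ℝ) : tauMink n p p = 0 :=
  tauMink_of_not_fdCausal fun h => h.2.1 (sub_self p)

theorem tauMink_eq_indicator (p q : Fin (n + 1) → ℝ) :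
    tauMink n p q = {v | FdTimelike n v}.indicator (fun v => √(-eta n v v)) (q - p) := by
  by_cases ht : FdTimelike n (q - p)
  · rw [Set.indicator_of_mem (s := {v | FdTimelike n v}) ht, tauMink_of_fdCausal ht.fdCausal]
  rw [Set.indicator_of_notMem (s := {v | FdTimelike n v}) ht]
  by_cases hc : FdCausal n (q - p)
  · have hnull : 0 ≤ eta n (q - p) (q - p) := not_lt.1 fun h => ht ⟨h, hc.2.2⟩
    rw [tauMink_of_fdCausal hc, Real.sqrt_eq_zero']
    linarith
  · exact tauMink_of_not_fdCausal hc

theorem lowerSemicontinuous_tauMink :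
    LowerSemicontinuous fun pq : (Fin (n + 1) → ℝ) × (Fin (n + 1) → ℝ) =>
      tauMink n pq.1 pq.2 := by
  simp only [tauMink_eq_indicator]
  exact (continuous_eta_self.neg.sqrt.continuousOn.lowerSemicontinuous_indicator
    isOpen_setOf_fdTimelike fun _ _ => Real.sqrt_nonneg _).comp
    (continuous_snd.sub continuous_fst)

theorem tauMink_pos_iff (p q : Fin (n + 1) → ℝ) : 0 < tauMink n p q ↔ ChronLt n p q := by
  rw [tauMink_eq_indicator, ChronLt]
  by_cases ht : FdTimelike n (q - p)
  · simpa [Set.indicator_of_mem ht, ht] using ht.1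
  · simp [ht]

theorem CausalLe.trans {p q r : Fin (n + 1) → ℝ} (hpq : CausalLe n p q) (hqr : CausalLe n q r) :
    CausalLe n p r := by
  rcases hpq with rfl | hpq
  · exact hqr
  rcases hqr with rfl | hqr
  · exact Or.inr hpq
  rw [CausalLe, ← sub_add_sub_cancel' q p r]
  exact Or.inr (hpq.add hqr)

theorem ChronLt.trans {p q r : Fin (n + 1) → ℝ} (hpq : ChronLt n p q) (hqr : ChronLt n q r) :
    ChronLt n p r := by
  rw [ChronLt, ← sub_add_sub_cancel' q p r]
  exact FdTimelike.add hpq hqr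

theorem ChronLt.causalLe {p q : Fin (n + 1) → ℝ} (h : ChronLt n p q) : CausalLe n p q :=
  Or.inr (FdTimelike.fdCausal h)

theorem tauMink_add_le {x y z : Fin (n + 1) → ℝ} (hxy : CausalLe n x y) (hyz : CausalLe n y z) :
    tauMink n x y + tauMink n y z ≤ tauMink n x z := by
  rcases hxy with rfl | hxy
  · rw [tauMink_self, zero_add]
  rcases hyz with rfl | hyz
  · rw [tauMink_self, add_zero]
  have hsum : z - x = (y - x) + (z - y) := (sub_add_sub_cancel' y x z).symm
  rw [tauMink_of_fdCausal hxy, tauMink_of_fdCausal hyz,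
    tauMink_of_fdCausal (hsum ▸ hxy.add hyz), hsum]
  exact hxy.sqrt_neg_eta_add_le hyz

theorem tauMink_eq_zero_of_not_causalLe {p q : Fin (n + 1) → ℝ} (h : ¬CausalLe n p q) :
    tauMink n p q = 0 :=
  tauMink_of_not_fdCausal fun hc => h (Or.inr hc)

end Minkowski

theorem minkowski_is_lorentzian_pre_length_space (n : ℕ) :
    (∀ p : Fin (n + 1) → ℝ, CausalLe n p p) ∧
    (∀ p q r : Fin (n + 1) → ℝ, CausalLe n p q → CausalLe n q r → CausalLe n p r) ∧
    (∀ p q r : Fin (n + 1) → ℝ, ChronLt n p q → ChronLt n q r → ChronLt n p r) ∧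
    (∀ p q : Fin (n + 1) → ℝ, ChronLt n p q → CausalLe n p q) ∧
    LowerSemicontinuous (fun pq : (Fin (n + 1) → ℝ) × (Fin (n + 1) → ℝ) =>
      tauMink n pq.1 pq.2) ∧
    (∀ x y z : Fin (n + 1) → ℝ, CausalLe n x y → CausalLe n y z →
      tauMink n x y + tauMink n y z ≤ tauMink n x z) ∧
    (∀ x y : Fin (n + 1) → ℝ, ¬ CausalLe n x y → tauMink n x y = 0) ∧
    (∀ x y : Fin (n + 1) → ℝ, 0 < tauMink n x y ↔ ChronLt n x y) :=
  ⟨fun _ => Or.inl rfl, fun _ _ _ => CausalLe.trans, fun _ _ _ => ChronLt.trans,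
    fun _ _ => ChronLt.causalLe, lowerSemicontinuous_tauMink, fun _ _ _ => tauMink_add_le,
    fun _ _ => tauMink_eq_zero_of_not_causalLe, tauMink_pos_iff⟩
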